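/- arXiv:1605.09784 — 2 statements merged into one kernel-verified Lean document; each statement's English description precedes it below -/
import Mathlib

section
/- Let S be a finite nonempty set of points in Euclidean space ℝ^d with M = max_{p ∈ S} ‖p‖ > 0. Let ε be a real number with 0 < ε < 1 and set δ = ε/15. Let q ∈ ℝ^d be a query point with ‖q‖ ≥ (1/3)·M, let p_fn ∈ S satisfy ‖p_fn‖ < δ·M, and let p_sh ∈ S (the shrug point) satisfy ‖p_sh‖ ≤ δ·M. Then d(q, p_sh) > 0 and d(q, p_fn) / d(q, p_sh) < 1 + ε. -/
/-! By the triangle inequality, a point of norm at most `r < ‖q‖` lies at distance at least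
`‖q‖ - r` from `q`, and one of norm less than `r` at distance less than `‖q‖ + r`; so the ratio is
below `(‖q‖ + r) / (‖q‖ - r)`. For `r = ε M / 15` and `‖q‖ ≥ M / 3` this is at most `1 + ε`, the
slack being `ε M (3 - ε) / 15 ≥ 0` after clearing denominators. -/

section NormedGroup

variable {E : Type*} [SeminormedAddCommGroup E] {q p p' : E} {r : ℝ}

lemma norm_sub_le_dist_of_norm_le (hp : ‖p‖ ≤ r) : ‖q‖ - r ≤ dist q p := by
  rw [dist_eq_norm]
  linarith [norm_sub_norm_le q p]

lemma dist_lt_norm_add_of_norm_lt (hp : ‖p‖ < r) : dist q p < ‖q‖ + r := by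
  rw [dist_eq_norm]
  linarith [norm_sub_le q p]

lemma dist_pos_of_norm_le_of_lt_norm (hp : ‖p‖ ≤ r) (hr : r < ‖q‖) : 0 < dist q p := by
  linarith [norm_sub_le_dist_of_norm_le (q := q) hp]

lemma dist_div_dist_lt_of_norm_le (hp : ‖p‖ ≤ r) (hp' : ‖p'‖ < r) (hr : r < ‖q‖) :
    dist q p' / dist q p < (‖q‖ + r) / (‖q‖ - r) :=
  div_lt_div₀ (dist_lt_norm_add_of_norm_lt hp') (norm_sub_le_dist_of_norm_le hp)
    (by linarith [norm_nonneg p]) (by linarith)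

end NormedGroup

lemma add_div_sub_le_one_add {x M ε : ℝ} (hM : 0 < M) (hx : M / 3 ≤ x) (hε0 : 0 ≤ ε)
    (hε3 : ε ≤ 3) : (x + ε / 15 * M) / (x - ε / 15 * M) ≤ 1 + ε := by
  have hden : 0 < x - ε / 15 * M := by nlinarith
  rw [div_le_iff₀ hden]
  nlinarith [mul_le_mul_of_nonneg_left hx hε0,
    mul_nonneg (mul_nonneg hε0 hM.le) (sub_nonneg.2 hε3)]

theorem shrug_point_eps_approx_general
    (d : ℕ)
    (M : ℝ) (hMpos : M > 0)
    (ε : ℝ) (hε0 : 0 < ε) (hε1 : ε < 1)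
    (δ : ℝ) (hδ : δ = ε / 15)
    (q : EuclideanSpace ℝ (Fin d)) (hq : ‖q‖ ≥ (1 / 3) * M)
    (pfn : EuclideanSpace ℝ (Fin d)) (hpfn : ‖pfn‖ < δ * M)
    (psh : EuclideanSpace ℝ (Fin d)) (hpsh : ‖psh‖ ≤ δ * M) :
    dist q psh > 0 ∧ dist q pfn / dist q psh < 1 + ε := by
  subst hδ
  have hq' : M / 3 ≤ ‖q‖ := by linarith
  have hr : ε / 15 * M < ‖q‖ := by nlinarith
  refine ⟨dist_pos_of_norm_le_of_lt_norm hpsh hr, ?_⟩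
  calc dist q pfn / dist q psh < (‖q‖ + ε / 15 * M) / (‖q‖ - ε / 15 * M) :=
        dist_div_dist_lt_of_norm_le hpsh hpfn hr
    _ ≤ 1 + ε := add_div_sub_le_one_add hMpos hq' hε0.le (by linarith)

theorem shrug_point_eps_approx
    (d : ℕ) (S : Finset (EuclideanSpace ℝ (Fin d))) (hS : S.Nonempty)
    (M : ℝ) (hM : M = S.sup' hS (fun p => ‖p‖)) (hMpos : M > 0)
    (ε : ℝ) (hε0 : 0 < ε) (hε1 : ε < 1)
    (δ : ℝ) (hδ : δ = ε / 15)
    (q : EuclideanSpace ℝ (Fin d)) (hq : ‖q‖ ≥ (1 / 3) * M)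
    (pfn : EuclideanSpace ℝ (Fin d)) (hpfnS : pfn ∈ S) (hpfn : ‖pfn‖ < δ * M)
    (psh : EuclideanSpace ℝ (Fin d)) (hpshS : psh ∈ S) (hpsh : ‖psh‖ ≤ δ * M) :
    dist q psh > 0 ∧ dist q pfn / dist q psh < 1 + ε :=
  shrug_point_eps_approx_general d M hMpos ε hε0 hε1 δ hδ q hq pfn hpfn psh hpsh
end

section
/- Let S be a finite nonempty set of points in Euclidean space ℝ^d with M = max_{p ∈ S} ‖p‖ > 0. Let ε be a real number with 0 < ε < 1 and set δ = ε/15. Let q ∈ ℝ^d be any query point and let p_fn ∈ S be a true furthest neighbor of q in S, i.e., d(q, p_fn) ≥ d(q, p) for all p ∈ S. If ‖p_fn‖ < δ·M, then ‖q‖ ≥ (1/3)·M, and for every point p_sh ∈ S with ‖p_sh‖ ≤ δ·M it holds that d(q, p_sh) > 0 and d(q, p_fn) / d(q, p_sh) < 1 + ε; that is, any such p_sh is an ε-approximate furthest neighbor of q. -/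
/-!
Let `p` be a point of maximal norm `M`. Since `p_fn` is furthest from `q`,
`M - ‖q‖ ≤ d(q, p) ≤ d(q, p_fn) ≤ ‖q‖ + ‖p_fn‖ < ‖q‖ + δM`, so `‖q‖ > (1 - δ)M/2 ≥ M/3`.
Both `p_fn` and `p_sh` lie in the ball of radius `δM` about the origin, so from `q` their
distances differ by a factor of at most `(‖q‖ + δM)/(‖q‖ - δM)`, which is below `1 + ε`
because `δM` is small compared with `ε‖q‖`.
-/

section SeminormedAddCommGroup

variable {E : Type*} [SeminormedAddCommGroup E]

theorem norm_le_two_mul_norm_add_norm_of_dist_le {q p f : E} (h : dist q p ≤ dist q f) :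
    ‖p‖ ≤ 2 * ‖q‖ + ‖f‖ :=
  calc ‖p‖ ≤ ‖q‖ + ‖p - q‖ := norm_le_norm_add_norm_sub' p q
    _ = ‖q‖ + dist q p := by rw [dist_comm, dist_eq_norm]
    _ ≤ ‖q‖ + (‖q‖ + ‖f‖) := by gcongr; exact h.trans (dist_le_norm_add_norm q f)
    _ = 2 * ‖q‖ + ‖f‖ := by ring

theorem dist_lt_one_add_mul_dist_of_norm_lt_of_norm_le {q a b : E} {r ε : ℝ} (hε : 0 ≤ ε)
    (ha : ‖a‖ < r) (hb : ‖b‖ ≤ r) (hq : (2 + ε) * r ≤ ε * ‖q‖) :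
    dist q a < (1 + ε) * dist q b :=
  calc dist q a ≤ ‖q‖ + ‖a‖ := dist_le_norm_add_norm q a
    _ < ‖q‖ + r := by gcongr
    _ ≤ (1 + ε) * (‖q‖ - r) := by linarith
    _ ≤ (1 + ε) * dist q b := by
      gcongr
      calc ‖q‖ - r ≤ ‖q‖ - ‖b‖ := by gcongr
        _ ≤ dist q b := dist_eq_norm q b ▸ norm_sub_norm_le q b

end SeminormedAddCommGroup

theorem guaranteed_drusilla_shrug_point_general
    (d : ℕ) (S : Finset (EuclideanSpace ℝ (Fin d))) (hS : S.Nonempty)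
    (M : ℝ) (hM : M = S.sup' hS (fun p => ‖p‖))
    (ε : ℝ) (hε0 : 0 < ε) (hε1 : ε < 1)
    (δ : ℝ) (hδ : δ = ε / 15)
    (q : EuclideanSpace ℝ (Fin d))
    (pfn : EuclideanSpace ℝ (Fin d))
    (hfar : ∀ p ∈ S, dist q p ≤ dist q pfn)
    (hpfn : ‖pfn‖ < δ * M) :
    ‖q‖ ≥ (1 / 3) * M ∧
      ∀ psh ∈ S, ‖psh‖ ≤ δ * M →
        dist q psh > 0 ∧ dist q pfn / dist q psh < 1 + ε := by
  obtain ⟨pmax, hpmaxS, hpmax⟩ := S.exists_mem_eq_sup' hS (fun p => ‖p‖)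
  rw [← hM] at hpmax
  have hM0 : 0 ≤ M := hpmax ▸ norm_nonneg pmax
  have hMq : M ≤ 2 * ‖q‖ + ‖pfn‖ :=
    hpmax ▸ norm_le_two_mul_norm_add_norm_of_dist_le (hfar pmax hpmaxS)
  have hεM : ε * M ≤ M := mul_le_of_le_one_left hM0 hε1.le
  subst hδ
  have hq : (1 / 3) * M ≤ ‖q‖ := by linarith
  refine ⟨hq, fun psh _ hpsh => ?_⟩
  have hsmall : (2 + ε) * (ε / 15 * M) ≤ ε * ‖q‖ := by
    have : (2 + ε) / 15 * M ≤ ‖q‖ := by nlinarith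
    calc (2 + ε) * (ε / 15 * M) = ε * ((2 + ε) / 15 * M) := by ring
      _ ≤ ε * ‖q‖ := by gcongr
  have hlt := dist_lt_one_add_mul_dist_of_norm_lt_of_norm_le hε0.le hpfn hpsh hsmall
  have hpos : 0 < dist q psh :=
    pos_of_mul_pos_right (dist_nonneg.trans_lt hlt) (by linarith)
  exact ⟨hpos, (div_lt_iff₀ hpos).2 hlt⟩

theorem guaranteed_drusilla_shrug_point
    (d : ℕ) (S : Finset (EuclideanSpace ℝ (Fin d))) (hS : S.Nonempty)
    (M : ℝ) (hM : M = S.sup' hS (fun p => ‖p‖)) (hMpos : M > 0)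
    (ε : ℝ) (hε0 : 0 < ε) (hε1 : ε < 1)
    (δ : ℝ) (hδ : δ = ε / 15)
    (q : EuclideanSpace ℝ (Fin d))
    (pfn : EuclideanSpace ℝ (Fin d)) (hpfnS : pfn ∈ S)
    (hfar : ∀ p ∈ S, dist q p ≤ dist q pfn)
    (hpfn : ‖pfn‖ < δ * M) :
    ‖q‖ ≥ (1 / 3) * M ∧
      ∀ psh ∈ S, ‖psh‖ ≤ δ * M →
        dist q psh > 0 ∧ dist q pfn / dist q psh < 1 + ε :=
  guaranteed_drusilla_shrug_point_general d S hS M hM ε hε0 hε1 δ hδ q pfn hfar hpfn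
end
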